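/- Fix real parameters α, β, γ with α ≠ 0. Let J(x,y,z) be the 3×3 skew-symmetric matrix with J₁₂ = z, J₁₃ = −y(1 + z/(2α)), J₂₃ = 0, and let R(x,y,z) = (1/α) times the symmetric matrix with entries R₁₁ = α², R₁₂ = −αγ, R₁₃ = yz/2, R₂₂ = 0, R₂₃ = −y, R₃₃ = −βz (the Poisson and resistance matrices of the Qi system). Then the matrix N = JR + RJ, identified with the vector field N(x,y,z) = (N₃₂, N₁₃, N₂₁), fails the Jacobi identity: there exists a point p ∈ ℝ³ of the form (0,0,z) at which N(p)·(∇×N)(p) ≠ 0. -/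

import Mathlib

set_option linter.unusedVariables false

open Matrix

/-- Partial derivative with respect to the first variable. -/
noncomputable def pd1 (f : ℝ → ℝ → ℝ → ℝ) (x y z : ℝ) : ℝ := deriv (fun t => f t y z) x
/-- Partial derivative with respect to the second variable. -/
noncomputable def pd2 (f : ℝ → ℝ → ℝ → ℝ) (x y z : ℝ) : ℝ := deriv (fun t => f x t z) y
/-- Partial derivative with respect to the third variable. -/
noncomputable def pd3 (f : ℝ → ℝ → ℝ → ℝ) (x y z : ℝ) : ℝ := deriv (fun t => f x y t) z

/-- Poisson matrix of the Qi system. -/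
noncomputable def Jmat (α : ℝ) (x y z : ℝ) : Matrix (Fin 3) (Fin 3) ℝ :=
  !![0, z, -y * (1 + z / (2 * α)); -z, 0, 0; y * (1 + z / (2 * α)), 0, 0]

/-- Resistance matrix of the Qi system. -/
noncomputable def Rmat (α β γ : ℝ) (x y z : ℝ) : Matrix (Fin 3) (Fin 3) ℝ :=
  (1 / α) • !![α ^ 2, -α * γ, y * z / 2; -α * γ, 0, -y; y * z / 2, -y, -β * z]

/-- `N = JR + RJ`. -/
noncomputable def Nmat (α β γ : ℝ) (x y z : ℝ) : Matrix (Fin 3) (Fin 3) ℝ :=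
  Jmat α x y z * Rmat α β γ x y z + Rmat α β γ x y z * Jmat α x y z

/-- First component of the vector field associated to `N`: `N₃₂`. -/
noncomputable def N1 (α β γ : ℝ) (x y z : ℝ) : ℝ := Nmat α β γ x y z 2 1
/-- Second component: `N₁₃`. -/
noncomputable def N2 (α β γ : ℝ) (x y z : ℝ) : ℝ := Nmat α β γ x y z 0 2
/-- Third component: `N₂₁`. -/
noncomputable def N3 (α β γ : ℝ) (x y z : ℝ) : ℝ := Nmat α β γ x y z 1 0

/-- For the Qi system (`α ≠ 0`), the matrix `N = JR + RJ` fails the Jacobi identity: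
there is a point of the form `(0,0,z)` at which `N·(∇×N) ≠ 0`. -/
theorem stmt_6 (α β γ : ℝ) (hα : α ≠ 0) :
    ∃ z : ℝ,
      N1 α β γ 0 0 z * (pd2 (N3 α β γ) 0 0 z - pd3 (N2 α β γ) 0 0 z)
        + N2 α β γ 0 0 z * (pd3 (N1 α β γ) 0 0 z - pd1 (N3 α β γ) 0 0 z)
        + N3 α β γ 0 0 z * (pd1 (N2 α β γ) 0 0 z - pd2 (N1 α β γ) 0 0 z) ≠ 0 := by

  -- Closed forms for the components of N along relevant lines.
  have hN1 : ∀ t z : ℝ, N1 α β γ 0 t z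
      = (-(γ * (1 + z / (2 * α))) + z ^ 2 / (2 * α)) * t := by
    intro t z
    simp [N1, Nmat, Jmat, Rmat, Matrix.mul_apply, Fin.sum_univ_succ,
      Matrix.cons_val_succ, Matrix.vecHead, Matrix.vecTail, Function.comp]
    field_simp
  have hN2 : ∀ t z : ℝ, N2 α β γ t 0 z = 0 := by
    intro t z
    simp [N2, Nmat, Jmat, Rmat, Matrix.mul_apply, Fin.sum_univ_succ,
      Matrix.cons_val_succ, Matrix.vecHead, Matrix.vecTail, Function.comp]
  have hN3 : ∀ z : ℝ, N3 α β γ 0 0 z = -(α * z) := by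
    intro z
    simp [N3, Nmat, Jmat, Rmat, Matrix.mul_apply, Fin.sum_univ_succ,
      Matrix.cons_val_succ, Matrix.vecHead, Matrix.vecTail, Function.comp]
    field_simp
  -- The two derivatives that matter.
  have hpd1N2 : ∀ z : ℝ, pd1 (N2 α β γ) 0 0 z = 0 := by
    intro z
    have : (fun t => N2 α β γ t 0 z) = fun _ => (0 : ℝ) := funext fun t => hN2 t z
    simp [pd1, this]
  have hpd2N1 : ∀ z : ℝ, pd2 (N1 α β γ) 0 0 z
      = -(γ * (1 + z / (2 * α))) + z ^ 2 / (2 * α) := by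
    intro z
    have h : (fun t => N1 α β γ 0 t z)
        = fun t => (-(γ * (1 + z / (2 * α))) + z ^ 2 / (2 * α)) * t :=
      funext fun t => hN1 t z
    rw [pd2, h]
    simpa using ((hasDerivAt_id (0 : ℝ)).const_mul
      (-(γ * (1 + z / (2 * α))) + z ^ 2 / (2 * α))).deriv
  -- Value of the Jacobi expression at (0,0,z).
  have key : ∀ z : ℝ,
      N1 α β γ 0 0 z * (pd2 (N3 α β γ) 0 0 z - pd3 (N2 α β γ) 0 0 z)
        + N2 α β γ 0 0 z * (pd3 (N1 α β γ) 0 0 z - pd1 (N3 α β γ) 0 0 z)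
        + N3 α β γ 0 0 z * (pd1 (N2 α β γ) 0 0 z - pd2 (N1 α β γ) 0 0 z)
      = z ^ 3 / 2 - γ * z ^ 2 / 2 - α * γ * z := by
    intro z
    rw [hpd1N2, hpd2N1, hN3, hN2, hN1]
    field_simp
    ring
  by_contra h
  push_neg at h
  have h1 := h 1; have h2 := h 2; have h3 := h 3
  rw [key] at h1 h2 h3
  norm_num at h1 h2 h3
  linarith
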